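/- Let L > 0. Let u : ℝ → ℝ be four times continuously differentiable with u'(x) > 0 for all x and u(x+L) = u(x) + 1 for all x, and let v : ℝ → ℝ be a twice continuously differentiable L-periodic function. For ε small enough that u' + εv' > 0 on ℝ, define F(ε) := ∫₀^L exp(−(d/dx) log(u'(x) + εv'(x))) dx. Then F is differentiable at ε = 0 with F'(0) = −∫₀^L (d/dx)[ (1/u'(x)) · (d/dx) exp(−(d/dx) log u'(x)) ] · v(x) dx. -/

import Mathlib

/-!
Since `(log (u' + ε v'))' = (u'' + ε v'') / (u' + ε v')`, the `ε`-derivative of the integrand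
at `ε = 0` is `-E · (v'/u')'` with `E = exp (-(log u')')`. Periodicity keeps `u' + ε v'`
uniformly positive for small `ε`, so the integrand and its `ε`-derivative are continuous on a
compact neighbourhood of `{0} × [0, L]`, which justifies differentiating under the integral sign.
Two integrations by parts over a period, whose boundary terms cancel, then move the derivatives
onto `v`: `∫ E (v'/u')' = -∫ E' v'/u' = ∫ ((1/u') E')' v`.
-/

open Real Set Filter Topology MeasureTheory Function Interval

theorem deriv_periodic_of_add_const {𝕜 F : Type*} [NontriviallyNormedField 𝕜]
    [NormedAddCommGroup F] [NormedSpace 𝕜 F] {f : 𝕜 → F} {L : 𝕜} {c : F}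
    (hf : ∀ x, f (x + L) = f x + c) : Periodic (deriv f) L := fun x => by
  rw [← deriv_comp_add_const, funext hf, deriv_add_const]

protected theorem Function.Periodic.deriv {𝕜 F : Type*} [NontriviallyNormedField 𝕜]
    [NormedAddCommGroup F] [NormedSpace 𝕜 F] {f : 𝕜 → F} {L : 𝕜} (hf : Periodic f L) :
    Periodic (deriv f) L :=
  deriv_periodic_of_add_const (c := 0) (by simpa using hf)

theorem Function.Periodic.eventually_forall_add_mul_pos {w p : ℝ → ℝ} {L : ℝ}
    (hwL : Periodic w L) (hpL : Periodic p L) (hL : L ≠ 0) (hw : Continuous w)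
    (hp : Continuous p) (hpos : ∀ x, 0 < w x) :
    ∀ᶠ ε in 𝓝 (0 : ℝ), ∀ x, 0 < w x + ε * p x := by
  obtain ⟨_, ⟨x₀, rfl⟩, hmin⟩ :=
    (hwL.compact_of_continuous hL hw).exists_isLeast (range_nonempty w)
  obtain ⟨M, hM⟩ := isBounded_iff_forall_norm_le.mp (hpL.isBounded_of_continuous hL hp)
  have hsmall : ∀ᶠ ε in 𝓝 (0 : ℝ), |ε| * M < w x₀ := by
    have hcont : Continuous fun ε : ℝ => |ε| * M := by fun_prop
    have : Tendsto (fun ε : ℝ => |ε| * M) (𝓝 0) (𝓝 0) := by simpa using hcont.tendsto 0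
    exact this.eventually (gt_mem_nhds (hpos x₀))
  filter_upwards [hsmall] with ε hε x
  have : |ε * p x| ≤ |ε| * M := by
    rw [abs_mul]
    exact mul_le_mul_of_nonneg_left (hM _ ⟨x, rfl⟩) (abs_nonneg ε)
  linarith [neg_abs_le (ε * p x), hmin ⟨x, rfl⟩]

theorem hasDerivAt_intervalIntegral_of_continuousOn_deriv {E : Type*} [NormedAddCommGroup E]
    [NormedSpace ℝ E] {F F' : ℝ → ℝ → E} {s : Set ℝ} {ε₀ a b : ℝ} (hs : s ∈ 𝓝 ε₀)
    (hF : ∀ ε ∈ s, ContinuousOn (F ε) [[a, b]])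
    (hF' : ContinuousOn (uncurry F') (s ×ˢ [[a, b]]))
    (hderiv : ∀ ε ∈ s, ∀ x ∈ [[a, b]], HasDerivAt (F · x) (F' ε x) ε) :
    HasDerivAt (fun ε => ∫ x in a..b, F ε x) (∫ x in a..b, F' ε₀ x) ε₀ := by
  obtain ⟨δ, hδ, hδs⟩ := Metric.nhds_basis_closedBall.mem_iff.mp hs
  obtain ⟨C, hC⟩ := ((isCompact_closedBall ε₀ δ).prod isCompact_uIcc).exists_bound_of_continuousOn
    (hF'.mono (prod_mono hδs subset_rfl))
  have hF'₀ : ContinuousOn (F' ε₀) [[a, b]] :=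
    hF'.comp (f := fun x => (ε₀, x)) (by fun_prop) fun x hx => ⟨mem_of_mem_nhds hs, hx⟩
  refine (intervalIntegral.hasDerivAt_integral_of_dominated_loc_of_deriv_le (bound := fun _ => C)
    (Metric.ball_mem_nhds ε₀ hδ) ?_ ((hF ε₀ (mem_of_mem_nhds hs)).intervalIntegrable)
    ((hF'₀.mono uIoc_subset_uIcc).aestronglyMeasurable measurableSet_uIoc) ?_
    intervalIntegrable_const ?_).2
  · filter_upwards [hs] with ε hε
    exact ((hF ε hε).mono uIoc_subset_uIcc).aestronglyMeasurable measurableSet_uIoc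
  · exact ae_of_all _ fun x hx ε hε =>
      hC (ε, x) ⟨Metric.ball_subset_closedBall hε, uIoc_subset_uIcc hx⟩
  · exact ae_of_all _ fun x hx ε hε =>
      hderiv ε (hδs (Metric.ball_subset_closedBall hε)) x (uIoc_subset_uIcc hx)

theorem Function.Periodic.integral_mul_deriv_eq_neg_integral_deriv_mul {f g : ℝ → ℝ} {L : ℝ}
    (hfL : Periodic f L) (hgL : Periodic g L) (hf : ContDiff ℝ 1 f) (hg : ContDiff ℝ 1 g) :
    ∫ x in 0..L, f x * deriv g x = -∫ x in 0..L, deriv f x * g x := by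
  rw [intervalIntegral.integral_mul_deriv_eq_deriv_mul
    (fun x _ => (hf.differentiable one_ne_zero x).hasDerivAt)
    (fun x _ => (hg.differentiable one_ne_zero x).hasDerivAt)
    (hf.continuous_deriv_one.intervalIntegrable 0 L)
    (hg.continuous_deriv_one.intervalIntegrable 0 L), hfL.eq, hgL.eq]
  ring

theorem hasDerivAt_exp_neg_div_add_mul {a b c d ε : ℝ} (h : c + ε * d ≠ 0) :
    HasDerivAt (fun e => exp (-((a + e * b) / (c + e * d))))
      (exp (-((a + ε * b) / (c + ε * d))) *
        -((b * (c + ε * d) - (a + ε * b) * d) / (c + ε * d) ^ 2)) ε := by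
  have hnum : HasDerivAt (fun e => a + e * b) b ε := by
    simpa using ((hasDerivAt_id ε).mul_const b).const_add a
  have hden : HasDerivAt (fun e => c + e * d) d ε := by
    simpa using ((hasDerivAt_id ε).mul_const d).const_add c
  exact ((hnum.div hden h).neg).exp

theorem hasDerivAt_integral_exp_neg_deriv_log_add_mul {w p : ℝ → ℝ} {a b : ℝ}
    (hw : ContDiff ℝ 1 w) (hp : ContDiff ℝ 1 p)
    (hpos : ∀ᶠ ε in 𝓝 (0 : ℝ), ∀ x, 0 < w x + ε * p x) :
    HasDerivAt (fun ε => ∫ x in a..b, exp (-deriv (fun y => log (w y + ε * p y)) x))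
      (-∫ x in a..b, exp (-(deriv w x / w x)) * deriv (fun y => p y / w y) x) 0 := by
  have dw := hw.differentiable one_ne_zero
  have dp := hp.differentiable one_ne_zero
  have cw := hw.continuous
  have cp := hp.continuous
  set s := {ε : ℝ | ∀ x, 0 < w x + ε * p x}
  have hlog : ∀ ε ∈ s, ∀ x, deriv (fun y => log (w y + ε * p y)) x
      = (deriv w x + ε * deriv p x) / (w x + ε * p x) := fun ε hε x =>
    (((dw x).hasDerivAt.add ((dp x).hasDerivAt.const_mul ε)).log (hε x).ne').deriv
  have hw₀ : ∀ x, w x ≠ 0 := fun x => by simpa using (hpos.self_of_nhds x).ne'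
  have hΦ := hasDerivAt_intervalIntegral_of_continuousOn_deriv (a := a) (b := b) hpos
    (F := fun ε x => exp (-((deriv w x + ε * deriv p x) / (w x + ε * p x))))
    (fun ε hε => by
      have : ∀ x ∈ [[a, b]], w x + ε * p x ≠ 0 := fun x _ => (hε x).ne'
      fun_prop (disch := assumption))
    (by
      have h1 : ∀ z ∈ s ×ˢ [[a, b]], w z.2 + z.1 * p z.2 ≠ 0 := fun z hz => (hz.1 z.2).ne'
      have h2 : ∀ z ∈ s ×ˢ [[a, b]], (w z.2 + z.1 * p z.2) ^ 2 ≠ 0 := fun z hz =>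
        pow_ne_zero 2 (h1 z hz)
      fun_prop (disch := assumption))
    (fun ε hε x _ => hasDerivAt_exp_neg_div_add_mul (hε x).ne')
  refine (hΦ.congr_of_eventuallyEq ?_).congr_deriv ?_
  · filter_upwards [hpos] with ε hε
    exact intervalIntegral.integral_congr fun x _ => by simp only [hlog ε hε x]
  · rw [← intervalIntegral.integral_neg]
    refine intervalIntegral.integral_congr fun x _ => ?_
    rw [((dp x).hasDerivAt.fun_div (dw x).hasDerivAt (hw₀ x)).deriv]
    simp only [zero_mul, add_zero]
    ring

theorem Function.Periodic.integral_exp_neg_mul_deriv_div_eq {w v : ℝ → ℝ} {L : ℝ}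
    (hwL : Periodic w L) (hvL : Periodic v L) (hw : ContDiff ℝ 3 w) (hv : ContDiff ℝ 2 v)
    (hpos : ∀ x, 0 < w x) :
    ∫ x in 0..L, exp (-(deriv w x / w x)) * deriv (fun y => deriv v y / w y) x =
      ∫ x in 0..L, deriv (fun y => 1 / w y *
        deriv (fun z => exp (-deriv (fun s => log (w s)) z)) y) x * v x := by
  have hw₀ : ∀ x, w x ≠ 0 := fun x => (hpos x).ne'
  set E := fun z => exp (-deriv (fun s => log (w s)) z)
  have hE : ContDiff ℝ 2 E := (hw.log hw₀).deriv'.neg.exp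
  have hEL : Periodic E L := (hwL.comp log).deriv.comp fun t => exp (-t)
  have hEw : ∀ x, E x = exp (-(deriv w x / w x)) := fun x => by
    show exp _ = _
    rw [(((hw.differentiable (by norm_num)) x).hasDerivAt.log (hw₀ x)).deriv]
  have hq : ContDiff ℝ 1 fun y => deriv v y / w y := hv.deriv'.div (hw.of_le (by norm_num)) hw₀
  have hA : ContDiff ℝ 1 fun y => 1 / w y * deriv E y :=
    (contDiff_const.div (hw.of_le (by norm_num)) hw₀).mul hE.deriv'
  calc ∫ x in 0..L, exp (-(deriv w x / w x)) * deriv (fun y => deriv v y / w y) x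
      = ∫ x in 0..L, E x * deriv (fun y => deriv v y / w y) x := by simp only [hEw]
    _ = -∫ x in 0..L, deriv E x * (deriv v x / w x) :=
      hEL.integral_mul_deriv_eq_neg_integral_deriv_mul (hvL.deriv.div hwL)
        (hE.of_le one_le_two) hq
    _ = -∫ x in 0..L, (1 / w x * deriv E x) * deriv v x := by
      congr 1
      exact intervalIntegral.integral_congr fun x _ => by ring
    _ = ∫ x in 0..L, deriv (fun y => 1 / w y * deriv E y) x * v x := by
      rw [Periodic.integral_mul_deriv_eq_neg_integral_deriv_mul
        (f := fun y => 1 / w y * deriv E y) ((hwL.comp (1 / ·)).mul hEL.deriv) hvL hA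
        (hv.of_le one_le_two), neg_neg]

/-- First variation of the energy `φ(h) = ∫₀^L exp(−(log h')') dx` at a smooth monotone
periodic profile `u` in the direction of a smooth periodic function `v`:
`F(ε) = ∫₀^L exp(−(log(u' + εv'))') dx` is differentiable at `ε = 0` with
`F'(0) = −∫₀^L ((1/u')(e^{−(log u')'})')' v dx`. -/
theorem stmt11 (L : ℝ) (hL : 0 < L) (u : ℝ → ℝ) (hu : ContDiff ℝ 4 u)
    (hupos : ∀ x, 0 < deriv u x) (huper : ∀ x, u (x + L) = u x + 1)
    (v : ℝ → ℝ) (hv : ContDiff ℝ 2 v) (hvper : ∀ x, v (x + L) = v x)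
    (F : ℝ → ℝ)
    (hF : ∀ ε : ℝ, F ε = ∫ x in (0:ℝ)..L,
      Real.exp (-(deriv (fun y => Real.log (deriv u y + ε * deriv v y)) x))) :
    HasDerivAt F
      (-(∫ x in (0:ℝ)..L,
        deriv (fun y => (1 / deriv u y) *
          deriv (fun z => Real.exp (-(deriv (fun s => Real.log (deriv u s)) z))) y) x
          * v x)) 0 := by
  have hw : ContDiff ℝ 3 (deriv u) := hu.deriv'
  have hwL : Periodic (deriv u) L := deriv_periodic_of_add_const huper
  have hvL : Periodic v L := hvper
  have hp : ContDiff ℝ 1 (deriv v) := hv.deriv'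
  have hpos :=
    hwL.eventually_forall_add_mul_pos hvL.deriv hL.ne' hw.continuous hp.continuous hupos
  rw [funext hF, ← hwL.integral_exp_neg_mul_deriv_div_eq hvL hw hv hupos]
  exact hasDerivAt_integral_exp_neg_deriv_log_add_mul (hw.of_le (by norm_num)) hp hpos
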